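/- arXiv:1404.5586 — 2 statements merged into one kernel-verified Lean document; each statement's English description precedes it below -/
import Mathlib

section
/- Let c ∈ ℂ with Re(c) > 0 and let y : ℝ → ℂ be a bounded continuous twice-differentiable function satisfying y''(t) - c² y(t) = g(t) for all t ∈ ℝ, where g : ℝ → ℂ is bounded and measurable. Then for every t ∈ ℝ, y(t) = (e^{ct}/(2c)) ∫_t^∞ e^{-cs} (-g(s)) ds + (e^{-ct}/(2c)) ∫_{-∞}^t e^{cs} (-g(s)) ds. -/
/-!
Write `u = y' + c y` and `v = y' - c y`. The operator `d²/dt² - c²` factors as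
`(d/dt ∓ c)(d/dt ± c)`, so `(e^{-cs} u)' = e^{-cs} g` and `(e^{cs} v)' = e^{cs} g`.
Since `y` and `y'' = c² y + g` are bounded, so is `y'`; hence `e^{-cs} u(s) → 0` as `s → +∞`
and `e^{cs} v(s) → 0` as `s → -∞`, and the fundamental theorem of calculus on the two
half-lines gives `e^{-ct} u(t)` and `-e^{ct} v(t)` as the two integrals. The formula is then
`y = (u - v) / (2c)`.
-/

open Complex MeasureTheory Set Filter Topology

theorem norm_deriv_le_of_norm_le_of_norm_deriv_deriv_le {E : Type*} [NormedAddCommGroup E]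
    [NormedSpace ℝ E] {f : ℝ → E} {M B : ℝ} (hf : Differentiable ℝ f)
    (hf' : Differentiable ℝ (deriv f)) (hM : ∀ t, ‖f t‖ ≤ M)
    (hB : ∀ t, ‖deriv (deriv f) t‖ ≤ B) (t : ℝ) :
    ‖deriv f t‖ ≤ 2 * M + B := by
  have hB0 : 0 ≤ B := (norm_nonneg _).trans (hB t)
  have hlip (x : ℝ) : ‖deriv f x - deriv f t‖ ≤ B * ‖x - t‖ :=
    convex_univ.norm_image_sub_le_of_norm_deriv_le (fun x _ => hf' x) (fun x _ => hB x)
      (mem_univ t) (mem_univ x)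
  have hmvt : ‖(f (t + 1) - (t + 1) • deriv f t) - (f t - t • deriv f t)‖ ≤ B * ‖t + 1 - t‖ :=
    (convex_Icc t (t + 1)).norm_image_sub_le_of_norm_hasDerivWithin_le
      (f := fun x => f x - x • deriv f t) (f' := fun x => deriv f x - deriv f t)
      (fun x _ => by
        have h := (hf x).hasDerivAt.sub ((hasDerivAt_id' x).smul_const (deriv f t))
        rw [one_smul] at h
        exact h.hasDerivWithinAt)
      (fun x hx => (hlip x).trans <| mul_le_of_le_one_right hB0 <| by
        rw [Real.norm_eq_abs, abs_le]; constructor <;> linarith [hx.1, hx.2])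
      (left_mem_Icc.2 (by linarith)) (right_mem_Icc.2 (by linarith))
  have hstep : ‖f (t + 1) - f t - deriv f t‖ ≤ B := by
    simpa [add_smul, sub_sub_sub_comm] using hmvt
  calc ‖deriv f t‖ = ‖(f (t + 1) - f t) - (f (t + 1) - f t - deriv f t)‖ := by
        rw [sub_sub_cancel]
    _ ≤ ‖f (t + 1)‖ + ‖f t‖ + B := (norm_sub_le _ _).trans (add_le_add (norm_sub_le _ _) hstep)
    _ ≤ 2 * M + B := by linarith [hM t, hM (t + 1)]

theorem hasDerivAt_cexp_mul_ofReal (a : ℂ) (x : ℝ) :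
    HasDerivAt (fun s : ℝ => exp (a * s)) (a * exp (a * x)) x := by
  simpa [mul_comm] using (((hasDerivAt_id (x : ℂ)).const_mul a).cexp).comp_ofReal

theorem tendsto_cexp_mul_mul_atTop {a : ℂ} (ha : a.re < 0) {h : ℝ → ℂ}
    (hh : IsBoundedUnder (· ≤ ·) atTop (fun s => ‖h s‖)) :
    Tendsto (fun x : ℝ => exp (a * x) * h x) atTop (𝓝 0) := by
  refine Tendsto.zero_mul_isBoundedUnder_le ?_ hh
  simpa [Complex.tendsto_exp_nhds_zero_iff] using tendsto_const_nhds.neg_mul_atTop ha tendsto_id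

theorem tendsto_cexp_mul_mul_atBot {a : ℂ} (ha : 0 < a.re) {h : ℝ → ℂ}
    (hh : IsBoundedUnder (· ≤ ·) atBot (fun s => ‖h s‖)) :
    Tendsto (fun x : ℝ => exp (a * x) * h x) atBot (𝓝 0) := by
  refine Tendsto.zero_mul_isBoundedUnder_le ?_ hh
  simpa [Complex.tendsto_exp_nhds_zero_iff] using tendsto_const_nhds.pos_mul_atBot ha tendsto_id

theorem hasDerivAt_cexp_mul_mul_deriv_sub {y : ℝ → ℂ} (hy : Differentiable ℝ y)
    (hy' : Differentiable ℝ (deriv y)) (a : ℂ) (x : ℝ) :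
    HasDerivAt (fun s : ℝ => exp (a * s) * (deriv y s - a * y s))
      (exp (a * x) * (deriv (deriv y) x - a ^ 2 * y x)) x := by
  refine ((hasDerivAt_cexp_mul_ofReal a x).mul
    ((hy' x).hasDerivAt.sub ((hy x).hasDerivAt.const_mul a))).congr_deriv ?_
  simp only [Pi.sub_apply]
  ring

section HalfLine

variable {a : ℂ} {y g : ℝ → ℂ} {M M' K : ℝ}

theorem isBoundedUnder_norm_deriv_sub_mul (hM : ∀ t, ‖y t‖ ≤ M) (hM' : ∀ t, ‖deriv y t‖ ≤ M')
    (l : Filter ℝ) : IsBoundedUnder (· ≤ ·) l (fun s => ‖deriv y s - a * y s‖) :=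
  isBoundedUnder_of ⟨M' + ‖a‖ * M, fun s => (norm_sub_le _ _).trans <|
    add_le_add (hM' s) <| (norm_mul a (y s)).trans_le <| by gcongr; exact hM s⟩

variable (hy : Differentiable ℝ y) (hy' : Differentiable ℝ (deriv y))
  (hM : ∀ t, ‖y t‖ ≤ M) (hM' : ∀ t, ‖deriv y t‖ ≤ M')
  (hg : AEStronglyMeasurable g) (hK : ∀ t, ‖g t‖ ≤ K)
  (hode : ∀ t, deriv (deriv y) t - a ^ 2 * y t = g t)
include hy hy' hM hM' hg hK hode

theorem integral_Ioi_cexp_mul_eq (ha : a.re < 0) (t : ℝ) :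
    ∫ s in Ioi t, exp (a * s) * g s = -(exp (a * t) * (deriv y t - a * y t)) := by
  have hderiv (x : ℝ) := hode x ▸ hasDerivAt_cexp_mul_mul_deriv_sub hy hy' a x
  rw [integral_Ioi_of_hasDerivAt_of_tendsto' (fun x _ => hderiv x)
    ((integrableOn_exp_mul_complex_Ioi ha t).mul_bdd hg.restrict (ae_of_all _ hK))
    (tendsto_cexp_mul_mul_atTop ha (isBoundedUnder_norm_deriv_sub_mul hM hM' _)), zero_sub]

theorem integral_Iic_cexp_mul_eq (ha : 0 < a.re) (t : ℝ) :
    ∫ s in Iic t, exp (a * s) * g s = exp (a * t) * (deriv y t - a * y t) := by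
  have hderiv (x : ℝ) := hode x ▸ hasDerivAt_cexp_mul_mul_deriv_sub hy hy' a x
  rw [integral_Iic_of_hasDerivAt_of_tendsto' (fun x _ => hderiv x)
    ((integrableOn_exp_mul_complex_Iic ha t).mul_bdd hg.restrict (ae_of_all _ hK))
    (tendsto_cexp_mul_mul_atBot ha (isBoundedUnder_norm_deriv_sub_mul hM hM' _)), sub_zero]

end HalfLine

theorem stmt_1_general (c : ℂ) (hc : 0 < c.re) (y g : ℝ → ℂ)
    (hy_bdd : ∃ M, ∀ t, ‖y t‖ ≤ M)
    (hy_diff : Differentiable ℝ y) (hy_diff2 : Differentiable ℝ (deriv y))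
    (hg_meas : Measurable g) (hg_bdd : ∃ M, ∀ t, ‖g t‖ ≤ M)
    (hode : ∀ t : ℝ, deriv (deriv y) t - c ^ 2 * y t = g t) :
    ∀ t : ℝ,
      y t = Complex.exp (c * t) / (2 * c) *
              (∫ s in Set.Ioi t, Complex.exp (-c * s) * (-g s)) +
            Complex.exp (-c * t) / (2 * c) *
              (∫ s in Set.Iio t, Complex.exp (c * s) * (-g s)) := by
  obtain ⟨M, hM⟩ := hy_bdd
  obtain ⟨K, hK⟩ := hg_bdd
  have hy'' (t : ℝ) : ‖deriv (deriv y) t‖ ≤ K + ‖c‖ ^ 2 * M := by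
    rw [← sub_add_cancel (deriv (deriv y) t) (c ^ 2 * y t), hode t]
    refine (norm_add_le _ _).trans (add_le_add (hK t) ?_)
    rw [norm_mul, norm_pow]
    gcongr
    exact hM t
  have hy' := norm_deriv_le_of_norm_le_of_norm_deriv_deriv_le hy_diff hy_diff2 hM hy''
  intro t
  have hIoi := integral_Ioi_cexp_mul_eq (a := -c) hy_diff hy_diff2 hM hy'
    hg_meas.aestronglyMeasurable hK (by simpa only [neg_sq] using hode) (by simpa using hc) t
  have hIic := integral_Iic_cexp_mul_eq hy_diff hy_diff2 hM hy' hg_meas.aestronglyMeasurable hK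
    hode hc t
  simp only [mul_neg, integral_neg, ← integral_Iic_eq_integral_Iio, hIoi, hIic]
  have hc0 : c ≠ 0 := by rintro rfl; simp at hc
  field_simp
  rw [← Complex.exp_add, add_neg_cancel, Complex.exp_zero]
  ring

theorem stmt_1 (c : ℂ) (hc : 0 < c.re) (y g : ℝ → ℂ)
    (hy_cont : Continuous y) (hy_bdd : ∃ M, ∀ t, ‖y t‖ ≤ M)
    (hy_diff : Differentiable ℝ y) (hy_diff2 : Differentiable ℝ (deriv y))
    (hg_meas : Measurable g) (hg_bdd : ∃ M, ∀ t, ‖g t‖ ≤ M)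
    (hode : ∀ t : ℝ, deriv (deriv y) t - c ^ 2 * y t = g t) :
    ∀ t : ℝ,
      y t = Complex.exp (c * t) / (2 * c) *
              (∫ s in Set.Ioi t, Complex.exp (-c * s) * (-g s)) +
            Complex.exp (-c * t) / (2 * c) *
              (∫ s in Set.Iio t, Complex.exp (c * s) * (-g s)) :=
  stmt_1_general c hc y g hy_bdd hy_diff hy_diff2 hg_meas hg_bdd hode
end

section
/- Let c ∈ ℂ with Re(c) > 0, let A, B : ℝ → ℂ be bounded measurable functions with ‖A‖_∞ < |c| Re(c), and let y : ℝ → ℂ be a bounded continuous twice-differentiable weak solution of y''(t) + (A(t) - c²) y(t) = B(t) on ℝ. Then |y(t)| ≤ ‖B‖_∞ / (|c| Re(c) - ‖A‖_∞) for all t ∈ ℝ. -/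
/-!
Put `f = B - A y`, so that `y'' = c² y + f`. Then `w = y' + c y` and `v = y' - c y` solve
`w' = c w + f` and `v' = -c v + f`. A bounded solution of `u' = c u + f` with `Re c > 0` obeys
`‖u‖ ≤ ‖f‖_∞ / Re c`: the derivative `e^{-cs} f(s)` of `e^{-cs} u(s)` is bounded by
`‖f‖_∞ e^{-Re c s}`, so the mean value inequality on `[t, T]` and `T → ∞` give the estimate
(`w` and `v` are bounded because bounds on `y` and `y''` bound `y'`). Since `w - v = 2 c y`, this
gives `|c| ‖y‖_∞ Re c ≤ ‖B‖_∞ + ‖A‖_∞ ‖y‖_∞`, and the `A`-term is absorbed into the left side.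
-/

open Complex Filter Set

lemma norm_deriv_le_of_norm_le_of_norm_deriv2_le {E : Type*} [NormedAddCommGroup E]
    [NormedSpace ℝ E] {f f' f'' : ℝ → E} {M M₂ : ℝ}
    (hf : ∀ t, HasDerivAt f (f' t) t) (hf' : ∀ t, HasDerivAt f' (f'' t) t)
    (hM : ∀ t, ‖f t‖ ≤ M) (hM₂ : ∀ t, ‖f'' t‖ ≤ M₂) (t : ℝ) : ‖f' t‖ ≤ 2 * M + M₂ := by
  have hM₂0 : 0 ≤ M₂ := (norm_nonneg _).trans (hM₂ 0)
  have hf'_near : ∀ s ∈ Icc t (t + 1), ‖f' s - f' t‖ ≤ M₂ := fun s hs => by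
    have := norm_image_sub_le_of_norm_deriv_le_segment' (fun x _ => (hf' x).hasDerivWithinAt)
      (fun x _ => hM₂ x) s hs
    nlinarith [hs.2]
  have htaylor := norm_image_sub_le_of_norm_deriv_le_segment'
    (f := fun s => f s - (s - t) • f' t) (f' := fun s => f' s - f' t)
    (fun x _ => ((hf x).sub (((hasDerivAt_id x).sub_const t).smul_const (f' t))).congr_deriv
      (by rw [one_smul]) |>.hasDerivWithinAt)
    (fun x hx => hf'_near x (Ico_subset_Icc_self hx)) (t + 1) (right_mem_Icc.2 (by linarith))
  simp only [add_sub_cancel_left, one_smul, sub_self, zero_smul, sub_zero, mul_one] at htaylor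
  calc ‖f' t‖ = ‖f (t + 1) - f t - (f (t + 1) - f' t - f t)‖ := by congr 1; abel
    _ ≤ ‖f (t + 1)‖ + ‖f t‖ + M₂ := (norm_sub_le _ _).trans (add_le_add (norm_sub_le _ _) htaylor)
    _ ≤ 2 * M + M₂ := by linarith [hM (t + 1), hM t]

lemma norm_sub_le_of_norm_deriv_le_exp {E : Type*} [NormedAddCommGroup E] [NormedSpace ℝ E]
    {g g' : ℝ → E} {r F a b : ℝ} (hr : 0 < r) (hab : a ≤ b)
    (hg : ∀ s, HasDerivAt g (g' s) s) (hF : ∀ s, ‖g' s‖ ≤ F * Real.exp (-(r * s))) :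
    ‖g b - g a‖ ≤ F / r * Real.exp (-(r * a)) := by
  have hF0 : 0 ≤ F := by simpa using (norm_nonneg _).trans (hF 0)
  have hexp : ∀ s, HasDerivAt (fun s => Real.exp (-(r * s))) (-r * Real.exp (-(r * s))) s :=
    fun s => by simpa [mul_comm] using ((hasDerivAt_id s).const_mul r).neg.exp
  have hB : ∀ s, HasDerivAt (fun s => F / r * (Real.exp (-(r * a)) - Real.exp (-(r * s))))
      (F * Real.exp (-(r * s))) s := fun s =>
    (((hexp s).const_sub _).const_mul (F / r)).congr_deriv (by field_simp)
  have hfence := image_norm_le_of_norm_deriv_right_le_deriv_boundary (f := fun s => g s - g a)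
    (fun s _ => ((hg s).sub_const (g a)).continuousAt.continuousWithinAt)
    (fun s _ => ((hg s).sub_const (g a)).hasDerivWithinAt) (by simp) hB (fun s _ => hF s)
    (right_mem_Icc.2 hab)
  refine hfence.trans ?_
  have := Real.exp_pos (-(r * b))
  rw [mul_sub]
  nlinarith [div_nonneg hF0 hr.le]

section LinearODE

variable {E : Type*} [NormedAddCommGroup E] [NormedSpace ℂ E] {c : ℂ} {u f : ℝ → E} {K F : ℝ}

lemma norm_le_of_hasDerivAt_eq_smul_add (hc : 0 < c.re)
    (hu : ∀ t, HasDerivAt u (c • u t + f t) t) (hK : ∀ t, ‖u t‖ ≤ K)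
    (hF : ∀ t, ‖f t‖ ≤ F) (t : ℝ) : ‖u t‖ ≤ F / c.re := by
  have norm_exp : ∀ s : ℝ, ‖cexp (-(c * s))‖ = Real.exp (-(c.re * s)) := fun s => by
    simp [Complex.norm_exp]
  have hg : ∀ s : ℝ, HasDerivAt (fun s : ℝ => cexp (-(c * s)) • u s)
      (cexp (-(c * s)) • f s) s := fun s => by
    have hexp : HasDerivAt (fun s : ℝ => cexp (-(c * s))) (-c * cexp (-(c * s))) s := by
      simpa [mul_comm] using ((hasDerivAt_id (s : ℂ)).const_mul c).neg.cexp.comp_ofReal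
    refine (hexp.smul (hu s)).congr_deriv ?_
    rw [smul_add, smul_smul, add_right_comm, ← add_smul, mul_comm, neg_mul, add_neg_cancel,
      zero_smul, zero_add]
  have key : ∀ T, t ≤ T → ‖u t‖ ≤ F / c.re + K * Real.exp (-(c.re * (T - t))) := by
    intro T hT
    have hdiff := norm_sub_le_of_norm_deriv_le_exp hc hT hg
      (fun s => by rw [norm_smul, norm_exp, mul_comm]; gcongr; exact hF s)
    have hT : ‖cexp (-(c * T)) • u T‖ ≤ Real.exp (-(c.re * T)) * K := by
      rw [norm_smul, norm_exp]; gcongr; exact hK T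
    have htri := norm_le_norm_add_norm_sub' (cexp (-(c * t)) • u t) (cexp (-(c * T)) • u T)
    rw [norm_smul, norm_exp, norm_sub_rev] at htri
    have hsplit : Real.exp (-(c.re * T))
        = Real.exp (-(c.re * t)) * Real.exp (-(c.re * (T - t))) := by
      rw [← Real.exp_add]; ring_nf
    rw [hsplit] at hT
    refine le_of_mul_le_mul_left ?_ (Real.exp_pos (-(c.re * t)))
    linarith
  have hlim : Tendsto (fun T => F / c.re + K * Real.exp (-(c.re * (T - t)))) atTop
      (nhds (F / c.re + K * 0)) := by
    refine tendsto_const_nhds.add (tendsto_const_nhds.mul (Real.tendsto_exp_atBot.comp ?_))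
    simpa only [sub_eq_add_neg, Function.comp_def, id] using tendsto_neg_atTop_atBot.comp
      ((tendsto_atTop_add_const_right _ (-t) tendsto_id).const_mul_atTop hc)
  simpa using ge_of_tendsto hlim ((eventually_ge_atTop t).mono key)

lemma norm_le_of_hasDerivAt_eq_neg_smul_add (hc : 0 < c.re)
    (hu : ∀ t, HasDerivAt u (-c • u t + f t) t) (hK : ∀ t, ‖u t‖ ≤ K)
    (hF : ∀ t, ‖f t‖ ≤ F) (t : ℝ) : ‖u t‖ ≤ F / c.re := by
  have hrev : ∀ s, HasDerivAt (fun s => u (-s)) (c • u (-s) + -f (-s)) s := fun s => by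
    refine ((hu (-s)).scomp s (hasDerivAt_neg s)).congr_deriv ?_
    simp [smul_add, neg_smul]
  simpa using norm_le_of_hasDerivAt_eq_smul_add hc hrev (fun s => hK (-s))
    (fun s => by simpa using hF (-s)) (-t)

lemma norm_le_of_hasDerivAt_eq_sq_smul_add (hc : 0 < c.re) {y y' : ℝ → E} {M : ℝ}
    (hy : ∀ t, HasDerivAt y (y' t) t) (hy' : ∀ t, HasDerivAt y' (c ^ 2 • y t + f t) t)
    (hM : ∀ t, ‖y t‖ ≤ M) (hF : ∀ t, ‖f t‖ ≤ F) (t : ℝ) : ‖y t‖ ≤ F / (‖c‖ * c.re) := by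
  have hy'_bdd : ∀ t, ‖y' t‖ ≤ 2 * M + (‖c‖ ^ 2 * M + F) :=
    norm_deriv_le_of_norm_le_of_norm_deriv2_le hy hy' hM fun t => by
      grw [norm_add_le, norm_smul, norm_pow, hM t, hF t]
  have hbdd : ∀ d : ℂ, ‖d‖ = ‖c‖ →
      ∀ t, ‖y' t + d • y t‖ ≤ 2 * M + (‖c‖ ^ 2 * M + F) + ‖c‖ * M :=
    fun d hd t => by grw [norm_add_le, norm_smul, hd, hy'_bdd t, hM t]
  have hw := norm_le_of_hasDerivAt_eq_smul_add hc (u := fun t => y' t + c • y t)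
    (fun t => ((hy' t).add ((hy t).const_smul c)).congr_deriv
      (by rw [smul_add, smul_smul, sq]; abel)) (hbdd c rfl) hF t
  have hv := norm_le_of_hasDerivAt_eq_neg_smul_add hc (u := fun t => y' t + (-c) • y t)
    (fun t => ((hy' t).add ((hy t).const_smul (-c))).congr_deriv
      (by rw [smul_add, smul_smul, neg_mul_neg, sq]; abel)) (hbdd (-c) (norm_neg c)) hF t
  have h2c : ‖(2 * c) • y t‖ ≤ 2 * (F / c.re) := by
    calc ‖(2 * c) • y t‖ = ‖(y' t + c • y t) - (y' t + (-c) • y t)‖ := by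
          congr 1; rw [neg_smul, two_mul, add_smul]; abel
      _ ≤ 2 * (F / c.re) := by grw [norm_sub_le, hw, hv]; linarith
  rw [norm_smul, norm_mul, Complex.norm_two, mul_assoc] at h2c
  rw [le_div_iff₀ (mul_pos (norm_pos_iff.2 fun h => by simp [h] at hc) hc)]
  have := (le_div_iff₀ hc).1 (le_of_mul_le_mul_left h2c two_pos)
  linarith

end LinearODE

theorem stmt_3_general (c : ℂ) (hc : 0 < c.re) (A B y : ℝ → ℂ) (MA MB : ℝ)
    (hA_bdd : ∀ t, ‖A t‖ ≤ MA) (hB_bdd : ∀ t, ‖B t‖ ≤ MB)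
    (hMA : MA < ‖c‖ * c.re)
    (hy_bdd : ∃ M, ∀ t, ‖y t‖ ≤ M)
    (hy_diff : Differentiable ℝ y) (hy_diff2 : Differentiable ℝ (deriv y))
    (hode : ∀ t : ℝ, deriv (deriv y) t + (A t - c ^ 2) * y t = B t) :
    ∀ t : ℝ, ‖y t‖ ≤ MB / (‖c‖ * c.re - MA) := by
  obtain ⟨M, hM⟩ := hy_bdd
  set S := ⨆ t, ‖y t‖
  have hS : ∀ t, ‖y t‖ ≤ S := le_ciSup ⟨M, forall_mem_range.2 hM⟩
  have hMA0 : 0 ≤ MA := (norm_nonneg _).trans (hA_bdd 0)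
  have hy'' : ∀ t, HasDerivAt (deriv y) (c ^ 2 • y t + (B t - A t * y t)) t := fun t => by
    refine (hy_diff2 t).hasDerivAt.congr_deriv ?_
    rw [smul_eq_mul]; linear_combination hode t
  have hf : ∀ t, ‖B t - A t * y t‖ ≤ MB + MA * S := fun t => by
    grw [norm_sub_le, norm_mul, hB_bdd t, hA_bdd t, hS t]
  have hS_le : S ≤ (MB + MA * S) / (‖c‖ * c.re) := ciSup_le fun t =>
    norm_le_of_hasDerivAt_eq_sq_smul_add hc (fun t => (hy_diff t).hasDerivAt) hy'' hS hf t
  intro t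
  refine (hS t).trans ?_
  rw [le_div_iff₀ (hMA0.trans_lt hMA)] at hS_le
  rw [le_div_iff₀ (sub_pos.2 hMA)]
  linarith

theorem stmt_3 (c : ℂ) (hc : 0 < c.re) (A B y : ℝ → ℂ) (MA MB : ℝ)
    (hA_meas : Measurable A) (hB_meas : Measurable B)
    (hA_bdd : ∀ t, ‖A t‖ ≤ MA) (hB_bdd : ∀ t, ‖B t‖ ≤ MB)
    (hMA : MA < ‖c‖ * c.re)
    (hy_cont : Continuous y) (hy_bdd : ∃ M, ∀ t, ‖y t‖ ≤ M)
    (hy_diff : Differentiable ℝ y) (hy_diff2 : Differentiable ℝ (deriv y))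
    (hode : ∀ t : ℝ, deriv (deriv y) t + (A t - c ^ 2) * y t = B t) :
    ∀ t : ℝ, ‖y t‖ ≤ MB / (‖c‖ * c.re - MA) :=
  stmt_3_general c hc A B y MA MB hA_bdd hB_bdd hMA hy_bdd hy_diff hy_diff2 hode
end
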